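/- With W the ℚ(q^{1/2})-span of |m⟩, m ∈ ℤ_{≥0}^n, and the bilinear form (|m⟩,|m'⟩) = δ_{m,m'} q^{-(1/2)Σ m_i(m_i-1)}/∏[m_i]!, define e_n|m⟩ = -q^{1/2}|m - e_n⟩, f_n|m⟩ = q^{-1/2}[m_n+1]|m + e_n⟩, k_n|m⟩ = q^{-m_n - 1/2}|m⟩. Then (e_n v, v') = (v, -q^{-1/2}k_n^{-1}f_n v') for all basis vectors v, v'. -/

import Mathlib

/-! Both sides vanish unless `m = m' + e_n`, since `e_n` lowers and `f_n` raises the `n`-th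
coordinate by one. In that case the identity reduces to
`(|m' + e_n⟩, |m' + e_n⟩) = q^{-m'_n} [m'_n + 1]⁻¹ (|m'⟩, |m'⟩)`: raising `m'_n` by one adds
`2 m'_n` to `Σ_i m_i (m_i - 1)` and the factor `[m'_n + 1]` to `∏_i [m_i]!`. -/

/- The field ℚ(q^{1/2}): we realize it as the rational function field in the
indeterminate `t = q^{1/2}`, so that `q = t²`. -/
noncomputable abbrev Kq : Type := RatFunc ℚ
noncomputable abbrev sqrtq : Kq := RatFunc.X   -- `q^{1/2}`
noncomputable abbrev q : Kq := sqrtq ^ 2        -- `q`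

/-- The balanced q-integer `[m] = (q^m - q^{-m})/(q - q^{-1})`. -/
noncomputable def qInt (m : ℕ) : Kq :=
  (q ^ m - q⁻¹ ^ m) / (q - q⁻¹)

/-- The q-factorial `[m]!`. -/
noncomputable def qFac (m : ℕ) : Kq :=
  ∏ k ∈ Finset.range m, qInt (k + 1)

/-- The ℚ(q^{1/2})-vector space `W` with basis `|m⟩`, `m ∈ ℤ_{≥0}^n`. -/
noncomputable abbrev W (n : ℕ) : Type := (Fin n → ℕ) →₀ Kq

/-- The basis vector `|m⟩`. -/
noncomputable def ket {n : ℕ} (m : Fin n → ℕ) : W n := Finsupp.single m 1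

/-- Extension of a map defined on basis vectors to an operator on `W`. -/
noncomputable def opOf {n : ℕ} (g : (Fin n → ℕ) → W n) : W n → W n :=
  fun v => v.sum fun m c => c • g m

/-- The symmetric bilinear form
`(|m⟩,|m'⟩) = δ_{m,m'} q^{-(1/2)Σ_i m_i(m_i-1)} / ∏_i [m_i]!`. -/
noncomputable def bform {n : ℕ} (v v' : W n) : Kq :=
  v.sum fun m c =>
    c * v' m * (q ^ (-(((∑ i, m i * (m i - 1)) / 2 : ℕ) : ℤ)) * (∏ i, qFac (m i))⁻¹)

/-- `e_n |m⟩ = -q^{1/2} |m - e_n⟩` (zero if `m_n = 0`). -/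
noncomputable def eN {n : ℕ} (ln : Fin n) : W n → W n :=
  opOf fun m =>
    if m ln = 0 then 0 else (-sqrtq) • ket (Function.update m ln (m ln - 1))

/-- `f_n |m⟩ = q^{-1/2}[m_n+1] |m + e_n⟩`. -/
noncomputable def fN {n : ℕ} (ln : Fin n) : W n → W n :=
  opOf fun m => (sqrtq⁻¹ * qInt (m ln + 1)) • ket (Function.update m ln (m ln + 1))

/-- `k_n⁻¹ |m⟩ = q^{m_n + 1/2} |m⟩` (since `k_n |m⟩ = q^{-m_n-1/2}|m⟩`). -/
noncomputable def kInvN {n : ℕ} (ln : Fin n) : W n → W n :=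
  opOf fun m => (sqrtq ^ (2 * m ln + 1)) • ket m


open Function

lemma sqrtq_pow_ne_one {k : ℕ} (hk : k ≠ 0) : sqrtq ^ k ≠ 1 := by
  rw [sqrtq, ← RatFunc.algebraMap_X, ← map_pow, ← map_one (algebraMap (Polynomial ℚ) Kq), Ne,
    (RatFunc.algebraMap_injective ℚ).eq_iff]
  intro h
  simpa [hk] using congrArg Polynomial.natDegree h

lemma sqrtq_ne_zero : sqrtq ≠ 0 := RatFunc.X_ne_zero

lemma q_ne_zero : q ≠ 0 := pow_ne_zero _ sqrtq_ne_zero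

lemma q_pow_ne_inv_pow {k : ℕ} (hk : k ≠ 0) : q ^ k ≠ q⁻¹ ^ k := by
  intro h
  apply sqrtq_pow_ne_one (k := 4 * k) (by omega)
  calc sqrtq ^ (4 * k) = q ^ k * q ^ k := by rw [q, ← pow_mul, ← pow_add]; ring_nf
    _ = q ^ k * q⁻¹ ^ k := by rw [← h]
    _ = 1 := by rw [← mul_pow, mul_inv_cancel₀ q_ne_zero, one_pow]

lemma qInt_ne_zero {k : ℕ} (hk : k ≠ 0) : qInt k ≠ 0 :=
  div_ne_zero (sub_ne_zero.mpr (q_pow_ne_inv_pow hk))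
    (by simpa using sub_ne_zero.mpr (q_pow_ne_inv_pow one_ne_zero))

lemma qFac_succ (k : ℕ) : qFac (k + 1) = qInt (k + 1) * qFac k := by
  rw [qFac, Finset.prod_range_succ, mul_comm]; rfl

lemma qFac_ne_zero (k : ℕ) : qFac k ≠ 0 :=
  Finset.prod_ne_zero_iff.mpr fun _ _ => qInt_ne_zero (Nat.succ_ne_zero _)

@[to_additive]
lemma prod_apply_update_mul {ι α M : Type*} [Fintype ι] [DecidableEq ι] [CommMonoid M]
    (f : α → M) (m : ι → α) (i : ι) (a : α) :
    (∏ j, f (update m i a j)) * f (m i) = f a * ∏ j, f (m j) := by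
  rw [Fintype.prod_eq_mul_prod_compl i, Fintype.prod_eq_mul_prod_compl i (fun j => f (m j)),
    update_self, mul_right_comm, mul_assoc]
  congr 2
  exact Finset.prod_congr rfl fun j hj => by
    rw [update_of_ne (by simpa using hj)]

lemma eq_update_pred_iff {ι : Type*} [DecidableEq ι] {m m' : ι → ℕ} {i : ι} (h : m i ≠ 0) :
    m' = update m i (m i - 1) ↔ update m' i (m' i + 1) = m := by
  rw [update_eq_iff, eq_update_iff]
  grind

section

variable {n : ℕ}

noncomputable def ketWeight (m : Fin n → ℕ) : Kq :=
  q ^ (-(((∑ i, m i * (m i - 1)) / 2 : ℕ) : ℤ)) * (∏ i, qFac (m i))⁻¹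

lemma bform_single (a : Fin n → ℕ) (c : Kq) (v : W n) :
    bform (Finsupp.single a c) v = c * v a * ketWeight a := by
  rw [bform, Finsupp.sum_single_index (by simp)]; rfl

lemma bform_zero (v : W n) : bform 0 v = 0 :=
  Finsupp.sum_zero_index

lemma opOf_single (g : (Fin n → ℕ) → W n) (a : Fin n → ℕ) (c : Kq) :
    opOf g (Finsupp.single a c) = c • g a :=
  Finsupp.sum_single_index (zero_smul _ _)

lemma ketWeight_update_succ (m : Fin n → ℕ) (i : Fin n) :
    ketWeight (update m i (m i + 1)) = (q ^ m i)⁻¹ * (qInt (m i + 1))⁻¹ * ketWeight m := by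
  have hsum : ∑ j, update m i (m i + 1) j * (update m i (m i + 1) j - 1)
      = ∑ j, m j * (m j - 1) + 2 * m i := by
    have hstep : (m i + 1) * (m i + 1 - 1) = m i * (m i - 1) + 2 * m i := by
      cases m i <;> grind
    have := sum_apply_update_add (fun x => x * (x - 1)) m i (m i + 1)
    omega
  have hprod : ∏ j, qFac (update m i (m i + 1) j) = qInt (m i + 1) * ∏ j, qFac (m j) := by
    have := prod_apply_update_mul qFac m i (m i + 1)
    rw [qFac_succ, mul_right_comm] at this
    exact mul_right_cancel₀ (qFac_ne_zero _) this
  rw [ketWeight, ketWeight, hsum, hprod, Nat.add_mul_div_left _ _ two_pos]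
  rw [Nat.cast_add, neg_add, zpow_add₀ q_ne_zero, zpow_neg, zpow_neg, zpow_natCast, zpow_natCast,
    mul_inv]
  ring

lemma eN_ket (i : Fin n) (m : Fin n → ℕ) :
    eN i (ket m) = if m i = 0 then 0 else Finsupp.single (update m i (m i - 1)) (-sqrtq) := by
  rw [eN, ket, opOf_single, one_smul, ket, Finsupp.smul_single, smul_eq_mul, mul_one]

lemma smul_kInvN_fN_ket (i : Fin n) (m : Fin n → ℕ) :
    (-sqrtq⁻¹) • kInvN i (fN i (ket m)) =
      Finsupp.single (update m i (m i + 1)) (-(sqrtq ^ (2 * m i + 1) * qInt (m i + 1))) := by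
  simp only [fN, kInvN, ket, opOf_single, one_smul, Finsupp.smul_single, smul_eq_mul, mul_one,
    update_self]
  congr 1
  field_simp [sqrtq_ne_zero]
  ring

lemma bform_eN_ket (i : Fin n) (m m' : Fin n → ℕ) :
    bform (eN i (ket m)) (ket m') = bform (ket m) ((-sqrtq⁻¹) • kInvN i (fN i (ket m'))) := by
  rw [eN_ket, smul_kInvN_fN_ket]
  split_ifs with h0
  · have hm : update m' i (m' i + 1) ≠ m := fun hm => by simp [← hm] at h0
    rw [bform_zero, ket, bform_single, Finsupp.single_apply, if_neg hm, mul_zero, zero_mul]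
  · simp only [ket, bform_single, Finsupp.single_apply, eq_update_pred_iff h0]
    split_ifs with hm
    · subst hm
      rw [ketWeight_update_succ, update_self, add_tsub_cancel_right, update_idem, update_eq_self]
      field_simp [qInt_ne_zero (Nat.succ_ne_zero (m' i)), sqrtq_ne_zero]
      ring
    · ring

end

/-- polarization at the odd node `n` for `U_q(C^{(2)}(n+1))`:
`(e_n v, v') = (v, -q^{-1/2} k_n^{-1} f_n v')` for all basis vectors `v, v'`. -/
theorem polarization_odd_node (n : ℕ) (hn : 0 < n) (m m' : Fin n → ℕ) :
    bform (eN ⟨n - 1, by omega⟩ (ket m)) (ket m') =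
      bform (ket m)
        ((-sqrtq⁻¹) • kInvN ⟨n - 1, by omega⟩ (fN ⟨n - 1, by omega⟩ (ket m'))) :=
  bform_eN_ket _ m m'
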